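/- Let η, θ ∈ ℝ with 0 < η and η > A₊², where A₊ = (1+η)cos(2θ)/2. Set A₋ = (1−η)cos(2θ)/2, B = √(η − A₊²), and φ = arccos(A₊/√η). Then for every natural number t, the t-th power of G_b(η,θ) = [[cos 2θ, η sin 2θ],[−sin 2θ, η cos 2θ]] equals ((√η)^t / B) · [[B cos(φt) + A₋ sin(φt), η sin(φt) sin 2θ],[−sin(φt) sin 2θ, B cos(φt) − A₋ sin(φt)]]. -/

import Mathlib

open Matrix Real

/-- The noisy Grover iteration with bit-flip noise of parameter `η`. -/
noncomputable def Gb (η θ : ℝ) : Matrix (Fin 2) (Fin 2) ℝ :=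
  !![Real.cos (2 * θ), η * Real.sin (2 * θ); -Real.sin (2 * θ), η * Real.cos (2 * θ)]

/-!
`Gb η θ = A₊ • 1 + N` with `N` traceless and `N * N = -B² • 1`, so `K = B⁻¹ • N` is a square
root of `-1` and `Gb η θ = √η • (cos φ • 1 + sin φ • K)`. De Moivre's formula, transported
along the `ℝ`-algebra map `ℂ → Matrix (Fin 2) (Fin 2) ℝ` sending `I` to `K`, gives the powers.
-/

theorem cos_smul_one_add_sin_smul_pow {A : Type*} [Ring A] [Algebra ℝ A] {K : A}
    (hK : K * K = -1) (φ : ℝ) (n : ℕ) :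
    (cos φ • 1 + sin φ • K) ^ n = cos (φ * n) • (1 : A) + sin (φ * n) • K := by
  have hlift (x : ℝ) :
      Complex.liftAux K hK (Complex.exp (x * Complex.I)) = cos x • 1 + sin x • K := by
    rw [Complex.liftAux_apply, Complex.exp_ofReal_mul_I_re, Complex.exp_ofReal_mul_I_im,
      Algebra.algebraMap_eq_smul_one]
  rw [← hlift, ← hlift, ← map_pow, ← Complex.exp_nat_mul]
  push_cast
  ring_nf

theorem fin_two_traceless_mul_self {R : Type*} [CommRing R] (a b c : R) :
    !![a, b; c, -a] * !![a, b; c, -a] = (a ^ 2 + b * c) • (1 : Matrix (Fin 2) (Fin 2) R) := by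
  ext i j; fin_cases i <;> fin_cases j <;> simp <;> ring

theorem Gb_eq_smul_one_add (η θ : ℝ) :
    Gb η θ = ((1 + η) * cos (2 * θ) / 2) • 1 +
      !![(1 - η) * cos (2 * θ) / 2, η * sin (2 * θ);
        -sin (2 * θ), -((1 - η) * cos (2 * θ) / 2)] := by
  ext i j; fin_cases i <;> fin_cases j <;> simp [Gb] <;> ring

theorem sqrt_mul_cos_arccos_div_sqrt {a η : ℝ} (h : a ^ 2 ≤ η) :
    √η * cos (arccos (a / √η)) = a := by
  rcases (sqrt_nonneg η).eq_or_lt with hη | hη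
  · rw [← hη, zero_mul, eq_comm, ← sq_eq_zero_iff]
    nlinarith [sq_sqrt (sq_nonneg a |>.trans h), sq_nonneg a]
  · have ha := abs_le.mp (abs_le_sqrt h)
    rw [cos_arccos (by rw [le_div_iff₀ hη]; linarith) (by rw [div_le_iff₀ hη]; linarith),
      mul_div_cancel₀ _ hη.ne']

theorem sqrt_mul_sin_arccos_div_sqrt {a η : ℝ} (h : a ^ 2 ≤ η) :
    √η * sin (arccos (a / √η)) = √(η - a ^ 2) := by
  have hη : 0 ≤ η := (sq_nonneg a).trans h
  rw [sin_arccos, ← sqrt_mul hη, div_pow, sq_sqrt hη]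
  rcases hη.eq_or_lt with rfl | hη
  · rw [zero_mul, show a = 0 by nlinarith]; simp
  · rw [mul_sub, mul_one, mul_div_cancel₀ _ hη.ne']

theorem Gb_pow_general (η θ : ℝ)
    (Ap Am B φ : ℝ)
    (hAp : Ap = (1 + η) * Real.cos (2 * θ) / 2)
    (hAm : Am = (1 - η) * Real.cos (2 * θ) / 2)
    (hB : B = Real.sqrt (η - Ap ^ 2))
    (hφ : φ = Real.arccos (Ap / Real.sqrt η))
    (h : Ap ^ 2 < η) (t : ℕ) :
    (Gb η θ) ^ t =
      ((Real.sqrt η) ^ t / B) •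
        !![B * Real.cos (φ * t) + Am * Real.sin (φ * t),
            η * Real.sin (φ * t) * Real.sin (2 * θ);
           -Real.sin (φ * t) * Real.sin (2 * θ),
            B * Real.cos (φ * t) - Am * Real.sin (φ * t)] := by
  have hB0 : B ≠ 0 := hB ▸ (sqrt_pos.mpr (sub_pos.mpr h)).ne'
  have hB2 : B ^ 2 = η - Ap ^ 2 := hB ▸ sq_sqrt (sub_pos.mpr h).le
  have hcos : √η * cos φ = Ap := hφ ▸ sqrt_mul_cos_arccos_div_sqrt h.le
  have hsin : √η * sin φ = B := hφ ▸ hB ▸ sqrt_mul_sin_arccos_div_sqrt h.le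
  set N : Matrix (Fin 2) (Fin 2) ℝ := !![Am, η * sin (2 * θ); -sin (2 * θ), -Am] with hN
  have hdet : Am ^ 2 + η * sin (2 * θ) * -sin (2 * θ) = -B ^ 2 := by
    rw [hB2, hAm, hAp]
    linear_combination (-η) * sin_sq_add_cos_sq (2 * θ)
  have hK : (B⁻¹ • N) * (B⁻¹ • N) = -1 := by
    rw [smul_mul_smul, hN, fin_two_traceless_mul_self, smul_smul, hdet,
      show B⁻¹ * B⁻¹ * -B ^ 2 = -1 by field_simp, neg_one_smul]
  have hGb : Gb η θ = √η • (cos φ • 1 + sin φ • B⁻¹ • N) := by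
    rw [smul_add, smul_smul, smul_smul, smul_smul, hcos, hsin, mul_inv_cancel₀ hB0,
      one_smul, Gb_eq_smul_one_add, hAp, hN, hAm]
  rw [hGb, smul_pow, cos_smul_one_add_sin_smul_pow hK]
  ext i j
  fin_cases i <;> fin_cases j <;> simp [hN, sub_eq_add_neg] <;> field_simp

theorem Gb_pow (η θ : ℝ) (hη : 0 < η)
    (Ap Am B φ : ℝ)
    (hAp : Ap = (1 + η) * Real.cos (2 * θ) / 2)
    (hAm : Am = (1 - η) * Real.cos (2 * θ) / 2)
    (hB : B = Real.sqrt (η - Ap ^ 2))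
    (hφ : φ = Real.arccos (Ap / Real.sqrt η))
    (h : Ap ^ 2 < η) (t : ℕ) :
    (Gb η θ) ^ t =
      ((Real.sqrt η) ^ t / B) •
        !![B * Real.cos (φ * t) + Am * Real.sin (φ * t),
            η * Real.sin (φ * t) * Real.sin (2 * θ);
           -Real.sin (φ * t) * Real.sin (2 * θ),
            B * Real.cos (φ * t) - Am * Real.sin (φ * t)] :=
  Gb_pow_general η θ Ap Am B φ hAp hAm hB hφ h t
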